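/- Let R be a commutative ring, r a unit of R, and A an associative unital R-algebra. Suppose A₊ is an invertible element of A and A₋ ∈ A satisfies the r-Heisenberg-Weyl relation r·A₋·A₊ − r⁻¹·A₊·A₋ = 1. For each m ∈ ℤ define L_m := −A₊^{1+m}·A₋ (using integer powers of the invertible element A₊). Then for all m, n ∈ ℤ the r-Witt (deformed centreless Virasoro) relation holds: r^{n−m}·L_m·L_n − r^{m−n}·L_n·L_m = [m−n]_r·L_{m+n}, where [k]_r denotes the r-integer for k ∈ ℤ (with [−k]_r = −[k]_r). -/

import Mathlib

/-!
The relation lets one move `A₋` past any integer power of `A₊`: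
`A₋·A₊^k = r^{-2k}·A₊^k·A₋ + r^{-k}[k]_r·A₊^{k-1}`. Multiplying both sides of this identity for `k`
on the right by the unit `A₊` turns it into the identity for `k + 1` (and back), so it holds for all
`k ∈ ℤ` at once.
Consequently `L_m·L_n = r^{-2(1+n)}·A₊^{m+n+2}·A₋² - r^{-(1+n)}[1+n]_r·L_{m+n}`. In the deformed
commutator the `A₋²` terms cancel, and the coefficient of `L_{m+n}` is
`r^{-1-n}[1+m]_r - r^{-1-m}[1+n]_r = [m-n]_r`, an instance of `[a+b]_r = r^b[a]_r + r^{-a}[b]_r`.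
-/

/-- The `r`-integer `[n]_r = ∑_{i=1}^{n} r^{n+1-2i}` for a unit `r` of a
commutative ring `R` and a natural number `n`. -/
def qInt {R : Type*} [CommRing R] (r : Rˣ) (n : ℕ) : R :=
  ∑ i ∈ Finset.range n, ((r ^ ((n : ℤ) - 1 - 2 * (i : ℤ)) : Rˣ) : R)

/-- The `r`-integer `[k]_r` for `k ∈ ℤ`, with `[-k]_r = -[k]_r`. -/
def zInt {R : Type*} [CommRing R] (r : Rˣ) : ℤ → R
  | Int.ofNat n => qInt r n
  | Int.negSucc n => - qInt r (n + 1)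

/-- The generator `L_m = -A₊^{1+m}·A₋` of the `r`-Witt algebra realised inside
the (extended) `r`-Heisenberg-Weyl algebra. -/
def wittL {A : Type*} [Ring A] (Ap : Aˣ) (Am : A) (m : ℤ) : A :=
  -(((Ap ^ (1 + m) : Aˣ) : A) * Am)

section RInteger

variable {R : Type*} [CommRing R] (r : Rˣ)

lemma qInt_succ (n : ℕ) : qInt r (n + 1) = r * qInt r n + ↑(r ^ (-n : ℤ)) := by
  rw [qInt, Finset.sum_range_succ, qInt, Finset.mul_sum]
  congr 1
  · refine Finset.sum_congr rfl fun i _ => ?_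
    rw [← Units.val_mul, ← zpow_one_add]
    push_cast; ring_nf
  · push_cast; ring_nf

lemma mul_qInt_succ (n : ℕ) : r * qInt r (n + 1) = qInt r n + ↑(r ^ (n + 1 : ℤ)) := by
  rw [qInt, Finset.sum_range_succ', qInt, mul_add, Finset.mul_sum]
  congr 1
  · refine Finset.sum_congr rfl fun i _ => ?_
    rw [← Units.val_mul, ← zpow_one_add]
    push_cast; ring_nf
  · rw [← Units.val_mul, ← zpow_one_add]
    push_cast; ring_nf

@[simp] lemma zInt_zero : zInt r 0 = 0 := by
  simp [zInt, qInt]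

lemma zInt_neg_natCast (n : ℕ) : zInt r (-n) = -qInt r n := by
  cases n with
  | zero => simp [qInt]
  | succ n => rfl

lemma zInt_add_one (k : ℤ) : zInt r (k + 1) = r * zInt r k + ↑(r ^ (-k)) := by
  cases k with
  | ofNat n => exact qInt_succ r n
  | negSucc n =>
    have h : zInt r (Int.negSucc n) = -qInt r (n + 1) := rfl
    rw [h, Int.negSucc_eq, show -((n : ℤ) + 1) + 1 = -n by ring, zInt_neg_natCast, neg_neg,
      mul_neg, mul_qInt_succ]
    ring

lemma zInt_add (a b : ℤ) : zInt r (a + b) = ↑(r ^ b) * zInt r a + ↑(r ^ (-a)) * zInt r b := by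
  have step (k : ℤ) : zInt r (a + k) = ↑(r ^ k) * zInt r a + ↑(r ^ (-a)) * zInt r k ↔
      zInt r (a + (k + 1)) = ↑(r ^ (k + 1)) * zInt r a + ↑(r ^ (-a)) * zInt r (k + 1) := by
    have hR : ↑(r ^ (k + 1)) * zInt r a + ↑(r ^ (-a)) * zInt r (k + 1) =
        r * (↑(r ^ k) * zInt r a + ↑(r ^ (-a)) * zInt r k) + ↑(r ^ (-(a + k))) := by
      rw [zInt_add_one, zpow_add_one, neg_add, zpow_add]
      push_cast; ring
    rw [hR, ← add_assoc, zInt_add_one, add_left_inj, Units.mul_right_inj]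
  induction b using Int.induction_on with
  | zero => simp
  | succ k ih => exact (step k).mp ih
  | pred k ih => exact (step (-k - 1)).mpr (by rwa [sub_add_cancel])

lemma zInt_neg (k : ℤ) : zInt r (-k) = -zInt r k := by
  have h := zInt_add r k (-k)
  rw [add_neg_cancel, zInt_zero, ← mul_add, eq_comm, Units.mul_right_eq_zero] at h
  exact eq_neg_of_add_eq_zero_right h

lemma zInt_sub (a b : ℤ) :
    zInt r (a - b) = ↑(r ^ (-b)) * zInt r a - ↑(r ^ (-a)) * zInt r b := by
  rw [sub_eq_add_neg, zInt_add, zInt_neg, mul_neg, ← sub_eq_add_neg]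

end RInteger

section HeisenbergWeyl

variable {R A : Type*} [CommRing R] [Ring A] [Algebra R A]

def IsRHeisenbergWeyl (r : Rˣ) (Ap : Aˣ) (Am : A) : Prop :=
  (r : R) • (Am * (Ap : A)) - ((r⁻¹ : Rˣ) : R) • ((Ap : A) * Am) = 1

namespace IsRHeisenbergWeyl

variable {r : Rˣ} {Ap : Aˣ} {Am : A}

lemma mul_unit (hrel : IsRHeisenbergWeyl r Ap Am) :
    Am * Ap = ((r ^ (-2 : ℤ) : Rˣ) : R) • (Ap * Am) + ((r⁻¹ : Rˣ) : R) • 1 := by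
  have h := congrArg (((r⁻¹ : Rˣ) : R) • ·) hrel
  simp only [smul_sub, smul_smul, Units.inv_mul, one_smul, sub_eq_iff_eq_add] at h
  rw [h, ← Units.val_mul, ← zpow_neg_one, ← zpow_add]
  abel

lemma mul_zpow (hrel : IsRHeisenbergWeyl r Ap Am) (k : ℤ) :
    Am * ↑(Ap ^ k) = ((r ^ (-2 * k) : Rˣ) : R) • (↑(Ap ^ k) * Am)
      + (((r ^ (-k) : Rˣ) : R) * zInt r k) • ↑(Ap ^ (k - 1)) := by
  let N (k : ℤ) : A := ((r ^ (-2 * k) : Rˣ) : R) • (↑(Ap ^ k) * Am)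
      + (((r ^ (-k) : Rˣ) : R) * zInt r k) • ↑(Ap ^ (k - 1))
  have hN (k : ℤ) : N k * Ap = N (k + 1) := by
    simp only [N, add_sub_cancel_right, zInt_add_one]
    rw [add_mul, smul_mul_assoc, smul_mul_assoc, mul_assoc, hrel.mul_unit, ← Units.val_mul,
      zpow_sub_one, inv_mul_cancel_right, mul_add, mul_smul_comm, mul_smul_comm, ← mul_assoc,
      ← Units.val_mul, ← zpow_add_one, mul_one]
    match_scalars
    · simp only [mul_one, ← Units.val_mul, ← zpow_add]
      ring_nf
    · simp only [mul_one, mul_add, ← zpow_neg_one, ← mul_assoc, ← Units.val_mul, ← zpow_add,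
        ← zpow_add_one]
      ring_nf
  have step (k : ℤ) : Am * ↑(Ap ^ k) = N k ↔ Am * ↑(Ap ^ (k + 1)) = N (k + 1) := by
    rw [← hN, zpow_add_one, Units.val_mul, ← mul_assoc, Units.mul_left_inj]
  change Am * ↑(Ap ^ k) = N k
  induction k using Int.induction_on with
  | zero => simp [N]
  | succ k ih => exact (step k).mp ih
  | pred k ih => exact (step (-k - 1)).mpr (by rwa [sub_add_cancel])

lemma wittL_mul_wittL (hrel : IsRHeisenbergWeyl r Ap Am) (m n : ℤ) :
    wittL Ap Am m * wittL Ap Am n =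
      ((r ^ (-2 * (1 + n)) : Rˣ) : R) • (↑(Ap ^ (m + n + 2)) * (Am * Am))
        - (((r ^ (-(1 + n)) : Rˣ) : R) * zInt r (1 + n)) • wittL Ap Am (m + n) := by
  have hpow (a b c : ℤ) (h : a + b = c) : (↑(Ap ^ a) : A) * ↑(Ap ^ b) = ↑(Ap ^ c) := by
    rw [← Units.val_mul, ← zpow_add, h]
  rw [wittL, wittL, wittL, neg_mul_neg, mul_assoc, ← mul_assoc Am, hrel.mul_zpow]
  simp only [add_mul, mul_add, smul_mul_assoc, mul_smul_comm, ← mul_assoc]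
  rw [hpow _ _ (m + n + 2) (by ring), hpow _ _ (1 + (m + n)) (by ring), mul_assoc _ Am,
    smul_neg, sub_neg_eq_add]

end IsRHeisenbergWeyl

end HeisenbergWeyl

/-- the elements `L_m = -A₊^{1+m}·A₋` satisfy the `r`-Witt
(deformed centreless Virasoro) relations
`r^{n-m}·L_m·L_n - r^{m-n}·L_n·L_m = [m-n]_r·L_{m+n}`. -/
theorem r_witt_realisation
    {R A : Type*} [CommRing R] [Ring A] [Algebra R A]
    (r : Rˣ) (Ap : Aˣ) (Am : A)
    (hrel : (r : R) • (Am * (Ap : A)) - ((r⁻¹ : Rˣ) : R) • ((Ap : A) * Am) = 1) :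
    ∀ m n : ℤ,
      ((r ^ (n - m) : Rˣ) : R) • (wittL Ap Am m * wittL Ap Am n)
        - ((r ^ (m - n) : Rˣ) : R) • (wittL Ap Am n * wittL Ap Am m)
      = zInt r (m - n) • wittL Ap Am (m + n) := by
  have hHW : IsRHeisenbergWeyl r Ap Am := hrel
  intro m n
  rw [hHW.wittL_mul_wittL, hHW.wittL_mul_wittL, add_comm n m]
  match_scalars
  · simp only [mul_one, ← Units.val_mul, ← zpow_add]
    ring_nf
  · have hcross : zInt r (m - n) = ((r ^ (-(1 + n)) : Rˣ) : R) * zInt r (1 + m)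
        - ((r ^ (-(1 + m)) : Rˣ) : R) * zInt r (1 + n) := by
      rw [← zInt_sub, add_sub_add_left_eq_sub]
    rw [hcross]
    simp only [mul_one, mul_neg, ← mul_assoc, ← Units.val_mul, ← zpow_add]
    ring_nf
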